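/- The function g defined by g(x) = −x − γ/ln 2 + 1/2 − ∑_{m=−∞}^{0} exp(−2^{x−m}) + ∑_{m=1}^{∞} (1 − exp(−2^{x−m})) has mean zero over a period: ∫₀¹ g(x) dx = 0. -/

import Mathlib

/-!
Integrating over a period unfolds each lattice sum into an integral over a half-line:
`∫₀¹ ∑_{j ≥ 0} exp(-2^(x+j)) dx = ∫₀^∞ exp(-2^x) dx` and
`∫₀¹ ∑_{j ≥ 1} (1 - exp(-2^(x-j))) dx = ∫_{-∞}^0 (1 - exp(-2^x)) dx`
(the exchange of sum and integral is justified by integrability on the half-line).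
The substitution `t = 2^x` turns these into `(log 2)⁻¹ ∫₁^∞ e^{-t}/t dt` and
`(log 2)⁻¹ ∫₀¹ (1 - e^{-t})/t dt`, whose difference is `γ / log 2` by the classical formula
`γ = ∫₀¹ (1 - e^{-t})/t dt - ∫₁^∞ e^{-t}/t dt`. That formula comes from
`Γ'(1) = ∫₀^∞ log t e^{-t} dt = -γ` by integrating by parts separately on `(0, 1]` and `(1, ∞)`.
The remaining part `-x + 1/2` of `g` has mean zero.
-/

open Real

/-- The periodic function `g`:
`g(x) = -x - γ/ln 2 + 1/2 - ∑_{m=-∞}^{0} exp(-2^{x-m}) + ∑_{m=1}^{∞} (1 - exp(-2^{x-m}))`,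
the first sum reindexed by `m = -j` and the second by `m = j+1`, `j : ℕ`. -/
noncomputable def g (x : ℝ) : ℝ :=
  -x - Real.eulerMascheroniConstant / Real.log 2 + 1 / 2
    - ∑' j : ℕ, Real.exp (-(2 : ℝ) ^ (x + j))
    + ∑' j : ℕ, (1 - Real.exp (-(2 : ℝ) ^ (x - (j + 1))))

open MeasureTheory Set Filter Topology

section

variable {E : Type*} [NormedAddCommGroup E] [NormedSpace ℝ E]

theorem setIntegral_Ioc_add_one (f : ℝ → E) (a : ℝ) :
    ∫ x in Ioc a (a + 1), f x = ∫ x in Ioc 0 1, f (x + a) := by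
  rw [← intervalIntegral.integral_of_le zero_le_one, intervalIntegral.integral_comp_add_right,
    zero_add, add_comm, intervalIntegral.integral_of_le (by linarith)]

theorem integral_tsum_comp_add_nat {f : ℝ → E} (hf : IntegrableOn f (Ioi 0)) :
    ∫ x in (0 : ℝ)..1, ∑' j : ℕ, f (x + j) = ∫ x in Ioi 0, f x := by
  have hunion : ⋃ j : ℕ, Ioc (j : ℝ) (j + 1) = Ioi 0 := by
    simpa using iUnion_Ioc_map_succ_eq_Ioi (f := (Nat.cast : ℕ → ℝ)) (fun j => by simp)
      (not_bddAbove_of_tendsto_atTop tendsto_natCast_atTop_atTop)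
  have hdisj : Pairwise (Function.onFun Disjoint fun j : ℕ => Ioc (j : ℝ) (j + 1)) := by
    simpa using Nat.mono_cast.pairwise_disjoint_on_Ioc_succ (β := ℝ)
  have hint (j : ℕ) : IntegrableOn (fun x => f (x + j)) (Ioc 0 1) := by
    have : IntervalIntegrable f volume j (j + 1) :=
      (intervalIntegrable_iff_integrableOn_Ioc_of_le (by linarith)).2
        (hf.mono_set (hunion ▸ subset_iUnion (fun j : ℕ => Ioc (j : ℝ) (j + 1)) j))
    simpa using (this.comp_add_right (j : ℝ)).1
  have hsum_norm := hasSum_integral_iUnion (fun _ => measurableSet_Ioc) hdisj (hunion ▸ hf.norm)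
  have hsum := hasSum_integral_iUnion (fun _ => measurableSet_Ioc) hdisj (hunion ▸ hf)
  simp only [hunion, setIntegral_Ioc_add_one] at hsum_norm hsum
  rw [intervalIntegral.integral_of_le zero_le_one, ← hsum.tsum_eq]
  exact (integral_tsum_of_summable_integral_norm hint hsum_norm.summable).symm

theorem integral_tsum_comp_sub_nat_succ {f : ℝ → E} (hf : IntegrableOn f (Iic 0)) :
    ∫ x in (0 : ℝ)..1, ∑' j : ℕ, f (x - (j + 1)) = ∫ x in Iic 0, f x := by
  have hf_neg : IntegrableOn (fun x => f (-x)) (Ioi 0) := by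
    rw [← integrableOn_Ici_iff_integrableOn_Ioi]
    simpa [Function.comp_def] using
      ((Measure.measurePreserving_neg volume).integrableOn_comp_preimage
        (Homeomorph.neg ℝ).measurableEmbedding).2 hf
  have hreflect := intervalIntegral.integral_comp_sub_left
    (fun y => ∑' j : ℕ, f (-(y + j))) (a := 0) (b := 1) 1
  simp only [sub_zero, sub_self] at hreflect
  rw [integral_tsum_comp_add_nat hf_neg, integral_comp_neg_Ioi, neg_zero] at hreflect
  rw [← hreflect]
  congr! 4 with x j
  congr 1
  ring

theorem abs_deriv_const_rpow_smul {b : ℝ} (hb : 1 < b) (x : ℝ) (v : E) :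
    |b ^ x * log b| • (b ^ x)⁻¹ • v = log b • v := by
  have : 0 < b ^ x := rpow_pos_of_pos (by linarith) x
  rw [smul_smul, abs_of_pos (mul_pos this (log_pos hb)), mul_comm, ← mul_assoc,
    inv_mul_cancel₀ this.ne', one_mul]

theorem integral_comp_const_rpow {b : ℝ} (hb : 1 < b) {s : Set ℝ} (hs : MeasurableSet s)
    (f : ℝ → E) :
    ∫ x in s, f (b ^ x) = (log b)⁻¹ • ∫ t in (b ^ ·) '' s, t⁻¹ • f t := by
  rw [integral_image_eq_integral_abs_deriv_smul hs
    (fun x _ => (hasStrictDerivAt_const_rpow (by linarith) x).hasDerivAt.hasDerivWithinAt)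
    (strictMono_rpow_of_base_gt_one hb).injective.injOn]
  simp only [abs_deriv_const_rpow_smul hb, integral_smul, inv_smul_smul₀ (log_pos hb).ne']

theorem integrableOn_comp_const_rpow_iff {b : ℝ} (hb : 1 < b) {s : Set ℝ} (hs : MeasurableSet s)
    (f : ℝ → E) :
    IntegrableOn (fun x => f (b ^ x)) s ↔ IntegrableOn (fun t => t⁻¹ • f t) ((b ^ ·) '' s) := by
  rw [integrableOn_image_iff_integrableOn_abs_deriv_smul hs
    (fun x _ => (hasStrictDerivAt_const_rpow (by linarith) x).hasDerivAt.hasDerivWithinAt)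
    (strictMono_rpow_of_base_gt_one hb).injective.injOn]
  simp only [abs_deriv_const_rpow_smul hb]
  exact (integrable_smul_iff (log_pos hb).ne' _).symm

end

theorem image_const_rpow_Ioi {b : ℝ} (hb : 1 < b) : (b ^ · : ℝ → ℝ) '' Ioi 0 = Ioi 1 := by
  simp only [rpow_def_of_pos (zero_lt_one.trans hb)]
  rw [← image_image exp, image_mul_left_Ioi (log_pos hb), mul_zero, image_exp_Ioi, exp_zero]

theorem image_const_rpow_Iic {b : ℝ} (hb : 1 < b) : (b ^ · : ℝ → ℝ) '' Iic 0 = Ioc 0 1 := by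
  simp only [rpow_def_of_pos (zero_lt_one.trans hb)]
  rw [← image_image exp, image_mul_left_Iic (log_pos hb), mul_zero, image_exp_Iic, exp_zero]

theorem integral_log_mul_exp_neg :
    ∫ t in Ioi (0 : ℝ), log t * exp (-t) = -eulerMascheroniConstant := by
  have hGammaIntegral := Complex.hasDerivAt_GammaIntegral (s := 1) (by simp)
  simp only [sub_self, Complex.cpow_zero, one_mul, ← Complex.ofReal_mul,
    integral_complex_ofReal] at hGammaIntegral
  have hGamma : HasDerivAt Complex.Gamma (∫ t in Ioi (0 : ℝ), log t * exp (-t) : ℝ) 1 := by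
    refine hGammaIntegral.congr_of_eventuallyEq ?_
    filter_upwards [(isOpen_lt continuous_const Complex.continuous_re).mem_nhds
      (by simp : (0 : ℝ) < (1 : ℂ).re)] with s hs using Complex.Gamma_eq_integral hs
  have hReal := hGamma.real_of_complex (z := 1)
  simp only [Complex.Gamma_ofReal, Complex.ofReal_re] at hReal
  exact hReal.unique hasDerivAt_Gamma_one

theorem integrableOn_log_mul_exp_neg_Ioc : IntegrableOn (fun t => log t * exp (-t)) (Ioc 0 1) :=
  (intervalIntegral.intervalIntegrable_log' (a := 0) (b := 1)).1.mul_continuousOn_of_subset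
    (by fun_prop : Continuous fun t : ℝ => exp (-t)).continuousOn measurableSet_Ioc isCompact_Icc
    Ioc_subset_Icc_self

theorem integrableOn_inv_mul_one_sub_exp_neg_Ioc :
    IntegrableOn (fun t => t⁻¹ * (1 - exp (-t))) (Ioc 0 1) := by
  refine (integrableOn_const (C := (1 : ℝ)) (by simp)).mono' (by fun_prop) ?_
  filter_upwards [ae_restrict_mem measurableSet_Ioc] with t ⟨ht0, _⟩
  have : 0 ≤ 1 - exp (-t) := by simp [ht0.le]
  rw [norm_of_nonneg (by positivity), inv_mul_le_iff₀ ht0, mul_one]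
  linarith [add_one_le_exp (-t)]

theorem integrableOn_inv_mul_exp_neg_Ioi : IntegrableOn (fun t => t⁻¹ * exp (-t)) (Ioi 1) := by
  refine (exp_neg_integrableOn_Ioi 1 one_pos).mono' (by fun_prop) ?_
  filter_upwards [ae_restrict_mem measurableSet_Ioi] with t (ht : 1 < t)
  rw [norm_of_nonneg (by positivity), neg_one_mul]
  exact mul_le_of_le_one_left (exp_pos _).le (inv_le_one_of_one_le₀ ht.le)

theorem integrableOn_log_mul_exp_neg_Ioi : IntegrableOn (fun t => log t * exp (-t)) (Ioi 1) := by
  have := (GammaIntegral_convergent (s := 2) (by norm_num)).mono_set (Ioi_subset_Ioi zero_le_one)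
  refine this.mono' (by fun_prop) ?_
  filter_upwards [ae_restrict_mem measurableSet_Ioi] with t (ht : 1 < t)
  rw [norm_of_nonneg (mul_nonneg (log_nonneg ht.le) (exp_pos _).le),
    show (2 : ℝ) - 1 = 1 by norm_num, rpow_one, mul_comm]
  gcongr
  linarith [log_le_sub_one_of_pos (by linarith : 0 < t)]

theorem integral_log_mul_exp_neg_Ioi_one :
    ∫ t in Ioi 1, log t * exp (-t) = ∫ t in Ioi 1, t⁻¹ * exp (-t) := by
  have hderiv (t : ℝ) (ht : t ∈ Ici 1) : HasDerivAt (fun t => -(exp (-t) * log t))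
      (log t * exp (-t) - t⁻¹ * exp (-t)) t := by
    have := (((hasDerivAt_neg t).exp).fun_mul (hasDerivAt_log (by linarith [ht.out]))).fun_neg
    exact this.congr_deriv (by ring)
  have hlim : Tendsto (fun t => -(exp (-t) * log t)) atTop (𝓝 0) := by
    rw [← neg_zero]
    refine (squeeze_zero' ?_ ?_ (tendsto_pow_mul_exp_neg_atTop_nhds_zero 1)).neg
    · filter_upwards [eventually_ge_atTop 1] with t ht
      exact mul_nonneg (exp_pos _).le (log_nonneg ht)
    · filter_upwards [eventually_gt_atTop 0] with t ht
      rw [pow_one, mul_comm]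
      gcongr
      linarith [log_le_sub_one_of_pos ht]
  have := integral_Ioi_of_hasDerivAt_of_tendsto' hderiv
    (integrableOn_log_mul_exp_neg_Ioi.sub integrableOn_inv_mul_exp_neg_Ioi) hlim
  rw [integral_sub integrableOn_log_mul_exp_neg_Ioi integrableOn_inv_mul_exp_neg_Ioi] at this
  simpa [sub_eq_zero] using this

theorem integral_log_mul_exp_neg_Ioc_zero_one :
    ∫ t in Ioc 0 1, log t * exp (-t) = -∫ t in Ioc 0 1, t⁻¹ * (1 - exp (-t)) := by
  set F : ℝ → ℝ := fun t => (1 - exp (-t)) * log t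
  have hderiv (t : ℝ) (ht : t ∈ Ioo 0 1) :
      HasDerivAt F (log t * exp (-t) + t⁻¹ * (1 - exp (-t))) t := by
    have := (((hasDerivAt_neg t).exp).const_sub 1).fun_mul (hasDerivAt_log ht.1.ne')
    exact this.congr_deriv (by ring)
  have hzero : Tendsto F (𝓝[>] 0) (𝓝 0) := by
    have hmul_log : Tendsto (fun t : ℝ => t * log t) (𝓝[>] 0) (𝓝 0) := by
      simpa using continuous_mul_log.continuousAt.tendsto.mono_left (nhdsWithin_le_nhds (a := 0))
    refine squeeze_zero_norm' ?_ (by simpa using hmul_log.norm)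
    filter_upwards [self_mem_nhdsWithin] with t (ht : 0 < t)
    have : 0 ≤ 1 - exp (-t) := by simp [ht.le]
    rw [norm_mul, norm_of_nonneg this, abs_of_pos ht, norm_eq_abs]
    gcongr
    linarith [add_one_le_exp (-t)]
  have hone : Tendsto F (𝓝[<] 1) (𝓝 0) := by
    have hF : ContinuousAt F 1 := by fun_prop (disch := norm_num)
    simpa [F] using hF.tendsto.mono_left nhdsWithin_le_nhds
  have := intervalIntegral.integral_eq_sub_of_hasDerivAt_of_tendsto zero_lt_one hderiv
    ((intervalIntegrable_iff_integrableOn_Ioc_of_le zero_le_one).2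
      (integrableOn_log_mul_exp_neg_Ioc.add integrableOn_inv_mul_one_sub_exp_neg_Ioc)) hzero hone
  rw [intervalIntegral.integral_of_le zero_le_one, integral_add integrableOn_log_mul_exp_neg_Ioc
    integrableOn_inv_mul_one_sub_exp_neg_Ioc] at this
  linarith

theorem eulerMascheroniConstant_eq_integral_sub_integral :
    eulerMascheroniConstant
      = (∫ t in Ioc 0 1, t⁻¹ * (1 - exp (-t))) - ∫ t in Ioi 1, t⁻¹ * exp (-t) := by
  rw [← neg_neg eulerMascheroniConstant, ← integral_log_mul_exp_neg,
    ← Ioc_union_Ioi_eq_Ioi zero_le_one, setIntegral_union (Ioc_disjoint_Ioi le_rfl)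
      measurableSet_Ioi integrableOn_log_mul_exp_neg_Ioc integrableOn_log_mul_exp_neg_Ioi,
    integral_log_mul_exp_neg_Ioc_zero_one, integral_log_mul_exp_neg_Ioi_one]
  ring

theorem summable_exp_neg_two_rpow_add (x : ℝ) :
    Summable fun j : ℕ => exp (-(2 : ℝ) ^ (x + j)) := by
  refine ((summable_geometric_of_lt_one (by norm_num) (by norm_num : (2 : ℝ)⁻¹ < 1)).mul_left
    (2 ^ x)⁻¹).of_nonneg_of_le (fun j => (exp_pos _).le) fun j => ?_
  calc exp (-(2 : ℝ) ^ (x + j)) = (exp ((2 : ℝ) ^ (x + j)))⁻¹ := exp_neg _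
    _ ≤ ((2 : ℝ) ^ (x + j))⁻¹ := by
      gcongr
      linarith [add_one_le_exp ((2 : ℝ) ^ (x + j))]
    _ = (2 ^ x)⁻¹ * 2⁻¹ ^ j := by
      rw [rpow_add_natCast two_ne_zero, mul_inv, inv_pow]

theorem summable_one_sub_exp_neg_two_rpow_sub (x : ℝ) :
    Summable fun j : ℕ => 1 - exp (-(2 : ℝ) ^ (x - (j + 1))) := by
  refine ((summable_geometric_of_lt_one (by norm_num) (by norm_num : (2 : ℝ)⁻¹ < 1)).mul_left
    (2 ^ (x - 1))).of_nonneg_of_le (fun j => ?_) fun j => ?_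
  · simp only [sub_nonneg, exp_le_one_iff, Left.neg_nonpos_iff]
    positivity
  · calc 1 - exp (-(2 : ℝ) ^ (x - (j + 1))) ≤ (2 : ℝ) ^ (x - (j + 1)) := by
          linarith [one_sub_le_exp_neg ((2 : ℝ) ^ (x - (j + 1)))]
      _ = 2 ^ (x - 1) * 2⁻¹ ^ j := by
        rw [show x - (j + 1) = x - 1 - j by ring, rpow_sub_natCast two_ne_zero, div_eq_mul_inv,
          inv_pow]

theorem antitone_tsum_exp_neg_two_rpow_add :
    Antitone fun x : ℝ => ∑' j : ℕ, exp (-(2 : ℝ) ^ (x + j)) := fun x y hxy =>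
  Summable.tsum_le_tsum (fun j => by gcongr; norm_num) (summable_exp_neg_two_rpow_add y)
    (summable_exp_neg_two_rpow_add x)

theorem monotone_tsum_one_sub_exp_neg_two_rpow_sub :
    Monotone fun x : ℝ => ∑' j : ℕ, (1 - exp (-(2 : ℝ) ^ (x - (j + 1)))) := fun x y hxy =>
  Summable.tsum_le_tsum (fun j => by gcongr; norm_num) (summable_one_sub_exp_neg_two_rpow_sub x)
    (summable_one_sub_exp_neg_two_rpow_sub y)

theorem integral_tsum_exp_neg_two_rpow_add :
    ∫ x in (0 : ℝ)..1, ∑' j : ℕ, exp (-(2 : ℝ) ^ (x + j))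
      = (log 2)⁻¹ * ∫ t in Ioi 1, t⁻¹ * exp (-t) := by
  have hint : IntegrableOn (fun x : ℝ => exp (-(2 : ℝ) ^ x)) (Ioi 0) := by
    rw [integrableOn_comp_const_rpow_iff one_lt_two measurableSet_Ioi (fun t => exp (-t)),
      image_const_rpow_Ioi one_lt_two]
    exact integrableOn_inv_mul_exp_neg_Ioi
  rw [integral_tsum_comp_add_nat hint,
    integral_comp_const_rpow one_lt_two measurableSet_Ioi (fun t => exp (-t)),
    image_const_rpow_Ioi one_lt_two]
  rfl

theorem integral_tsum_one_sub_exp_neg_two_rpow_sub :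
    ∫ x in (0 : ℝ)..1, ∑' j : ℕ, (1 - exp (-(2 : ℝ) ^ (x - (j + 1))))
      = (log 2)⁻¹ * ∫ t in Ioc 0 1, t⁻¹ * (1 - exp (-t)) := by
  have hint : IntegrableOn (fun x : ℝ => 1 - exp (-(2 : ℝ) ^ x)) (Iic 0) := by
    rw [integrableOn_comp_const_rpow_iff one_lt_two measurableSet_Iic (fun t => 1 - exp (-t)),
      image_const_rpow_Iic one_lt_two]
    exact integrableOn_inv_mul_one_sub_exp_neg_Ioc
  rw [integral_tsum_comp_sub_nat_succ hint,
    integral_comp_const_rpow one_lt_two measurableSet_Iic (fun t => 1 - exp (-t)),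
    image_const_rpow_Iic one_lt_two]
  rfl

theorem g_mean_zero : ∫ x in (0 : ℝ)..1, g x = 0 := by
  have hid : IntervalIntegrable (fun x : ℝ => -x) volume 0 1 :=
    intervalIntegral.intervalIntegrable_id.neg
  have hlin := (hid.sub (intervalIntegrable_const (c := eulerMascheroniConstant / log 2))).add
    (intervalIntegrable_const (c := 1 / 2))
  have hA := antitone_tsum_exp_neg_two_rpow_add.intervalIntegrable (μ := volume) (a := 0) (b := 1)
  have hB := monotone_tsum_one_sub_exp_neg_two_rpow_sub.intervalIntegrable (μ := volume) (a := 0)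
    (b := 1)
  unfold g
  rw [intervalIntegral.integral_add (hlin.sub hA) hB, intervalIntegral.integral_sub hlin hA,
    intervalIntegral.integral_add (hid.sub intervalIntegrable_const) intervalIntegrable_const,
    intervalIntegral.integral_sub hid intervalIntegrable_const, intervalIntegral.integral_neg,
    integral_id, integral_tsum_exp_neg_two_rpow_add, integral_tsum_one_sub_exp_neg_two_rpow_sub,
    eulerMascheroniConstant_eq_integral_sub_integral]
  norm_num
  ring
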